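/- Define a sequence by m₁ ≥ 32 and m_t = 2^(m_{t−1}/2^{t−1}) for t ≥ 2, and let log* denote the binary iterated logarithm. Then for all odd t ≥ 3, log*(m_{t−1}) ≥ (t−3)/2 + log*(m₂). -/

import Mathlib

/-!
Since `m (t + 1) = 2 ^ (m t / 2 ^ t)`, an induction gives `m t ≥ (4t + 4) 2^t`; the exponent
`y = m t / 2 ^ t` is then large enough for `2 ^ (2t + 1) y ≤ 2 ^ y`, i.e.
`2 ^ (t + 1) m t ≤ m (t + 1)`. Hence `m (t + 2) ≥ 2 ^ m t`, so `log*` gains at least one every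
two steps.
-/

/-- The binary iterated logarithm. -/
noncomputable def logStar (x : ℝ) : ℕ := sInf {n : ℕ | (Real.logb 2)^[n] x ≤ 1}

open Real

theorem exists_iterate_logb_le_one (x : ℝ) : ∃ n, (logb 2)^[n] x ≤ 1 := by
  suffices h : ∀ k : ℕ, ∀ x : ℝ, x ≤ 2 ^ k → ∃ n, (logb 2)^[n] x ≤ 1 by
    obtain ⟨k, hk⟩ := pow_unbounded_of_one_lt x one_lt_two
    exact h k x hk.le
  intro k
  induction k with
  | zero => exact fun x hx => ⟨0, by simpa using hx⟩
  | succ k ih =>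
    intro x hx
    rcases le_or_gt x 1 with hx1 | hx1
    · exact ⟨0, hx1⟩
    have hlog : logb 2 x ≤ 2 ^ k :=
      calc logb 2 x ≤ logb 2 (2 ^ (k + 1)) := logb_le_logb_of_le one_lt_two (by linarith) hx
        _ = k + 1 := by rw [logb_pow, logb_self_eq_one one_lt_two]; push_cast; ring
        _ ≤ 2 ^ k := by exact_mod_cast Nat.lt_two_pow_self
    obtain ⟨n, hn⟩ := ih _ hlog
    exact ⟨n + 1, hn⟩

theorem logStar_eq_zero_iff {x : ℝ} : logStar x = 0 ↔ x ≤ 1 := by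
  refine ⟨fun h => ?_, fun hx => Nat.sInf_eq_zero.mpr (Or.inl hx)⟩
  have hne : {n | (logb 2)^[n] x ≤ 1}.Nonempty := exists_iterate_logb_le_one x
  exact (Nat.sInf_eq_zero.mp h).resolve_right hne.ne_empty

theorem logStar_of_one_lt {x : ℝ} (hx : 1 < x) : logStar x = logStar (logb 2 x) + 1 :=
  (Nat.sInf_add (Nat.one_le_iff_ne_zero.mpr (logStar_eq_zero_iff.not.mpr hx.not_ge))).symm

theorem logStar_two_rpow {c : ℝ} (hc : 0 < c) : logStar (2 ^ c) = logStar c + 1 := by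
  rw [logStar_of_one_lt (one_lt_rpow one_lt_two hc), logb_rpow two_pos (by norm_num)]

theorem logStar_mono : Monotone logStar := by
  suffices h : ∀ n : ℕ, ∀ x y : ℝ, x ≤ y → logStar y = n → logStar x ≤ n from
    fun x y hxy => h _ x y hxy rfl
  intro n
  induction n with
  | zero =>
    intro x y hxy hy
    exact (logStar_eq_zero_iff.mpr (hxy.trans (logStar_eq_zero_iff.mp hy))).le
  | succ n ih =>
    intro x y hxy hy
    rcases le_or_gt x 1 with hx | hx
    · simp [logStar_eq_zero_iff.mpr hx]
    rw [logStar_of_one_lt (hx.trans_le hxy), Nat.add_right_cancel_iff] at hy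
    rw [logStar_of_one_lt hx]
    exact Nat.add_le_add_right (ih _ _ (logb_le_logb_of_le one_lt_two (by linarith) hxy) hy) 1

theorem two_pow_mul_le_two_rpow {k : ℕ} {y : ℝ} (hy : 2 * k + 2 ≤ y) :
    (2 : ℝ) ^ k * y ≤ 2 ^ y := by
  set w := y - k
  have hw : (k : ℝ) + 2 ≤ w := by linarith
  have hbernoulli : 1 + w / 2 ≤ (2 : ℝ) ^ (w / 2) := by
    simpa [one_add_one_eq_two] using
      one_add_mul_self_le_rpow_one_add (s := 1) (by norm_num) (p := w / 2) (by linarith)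
  have hsq : (2 : ℝ) ^ w = (2 ^ (w / 2)) ^ 2 := by
    rw [← rpow_natCast, ← rpow_mul two_pos.le]; norm_num
  have hyw : y ≤ 2 ^ w := by
    rw [hsq]
    nlinarith [pow_le_pow_left₀ (by linarith) hbernoulli 2, (Nat.cast_nonneg k : (0 : ℝ) ≤ k)]
  calc (2 : ℝ) ^ k * y ≤ 2 ^ k * 2 ^ w := by gcongr
    _ = 2 ^ y := by rw [← rpow_natCast, ← rpow_add two_pos, add_sub_cancel]

def TowerRecurrence (m : ℕ → ℝ) : Prop :=
  ∀ t : ℕ, 2 ≤ t → m t = (2 : ℝ) ^ (m (t - 1) / (2 : ℝ) ^ (t - 1))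

namespace TowerRecurrence

variable {m : ℕ → ℝ}

theorem apply_succ (hrec : TowerRecurrence m) {t : ℕ} (ht : 1 ≤ t) :
    m (t + 1) = 2 ^ (m t / 2 ^ t) := by
  simpa using hrec (t + 1) (by omega)

theorem two_pow_succ_mul_le (hrec : TowerRecurrence m) {t : ℕ} (ht : 1 ≤ t)
    (hmt : (4 * t + 4) * 2 ^ t ≤ m t) : 2 ^ (t + 1) * m t ≤ m (t + 1) := by
  have hy : 2 * ((2 * t + 1 : ℕ) : ℝ) + 2 ≤ m t / 2 ^ t := by
    rw [le_div_iff₀ (by positivity)]; push_cast; linarith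
  calc 2 ^ (t + 1) * m t = 2 ^ (2 * t + 1) * (m t / 2 ^ t) := by field_simp; ring
    _ ≤ 2 ^ (m t / 2 ^ t) := two_pow_mul_le_two_rpow hy
    _ = m (t + 1) := (hrec.apply_succ ht).symm

theorem lower_bound (hrec : TowerRecurrence m) (hm1 : 32 ≤ m 1) {t : ℕ} (ht : 1 ≤ t) :
    (4 * t + 4) * 2 ^ t ≤ m t := by
  induction t, ht using Nat.le_induction with
  | base => norm_num; linarith
  | succ t ht ih =>
    have h2t : (2 : ℝ) ≤ 2 ^ t := by simpa using pow_le_pow_right₀ one_le_two ht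
    have hmt : (4 * (t + 1 : ℕ) + 4 : ℝ) ≤ m t := by push_cast; nlinarith
    calc (4 * (t + 1 : ℕ) + 4) * (2 : ℝ) ^ (t + 1) ≤ 2 ^ (t + 1) * m t := by
          rw [mul_comm]; gcongr
      _ ≤ m (t + 1) := hrec.two_pow_succ_mul_le ht ih

theorem two_rpow_le_add_two (hrec : TowerRecurrence m) (hm1 : 32 ≤ m 1) {t : ℕ} (ht : 1 ≤ t) :
    2 ^ m t ≤ m (t + 2) := by
  rw [hrec.apply_succ (by omega : 1 ≤ t + 1)]
  gcongr
  · norm_num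
  rw [le_div_iff₀ (by positivity), mul_comm]
  exact hrec.two_pow_succ_mul_le ht (hrec.lower_bound hm1 ht)

theorem logStar_succ_le_add_two (hrec : TowerRecurrence m) (hm1 : 32 ≤ m 1) {t : ℕ}
    (ht : 1 ≤ t) : logStar (m t) + 1 ≤ logStar (m (t + 2)) := by
  have hpos : 0 < m t := lt_of_lt_of_le (by positivity) (hrec.lower_bound hm1 ht)
  rw [← logStar_two_rpow hpos]
  exact logStar_mono (hrec.two_rpow_le_add_two hm1 ht)

theorem logStar_two_add_le (hrec : TowerRecurrence m) (hm1 : 32 ≤ m 1) (s : ℕ) :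
    logStar (m 2) + s ≤ logStar (m (2 * s + 2)) := by
  induction s with
  | zero => simp
  | succ s ih =>
    have hstep := hrec.logStar_succ_le_add_two hm1 (t := 2 * s + 2) (by omega)
    rw [show 2 * (s + 1) + 2 = 2 * s + 2 + 2 by ring]
    omega

end TowerRecurrence

/-- if `m 1 ≥ 32` and `m t = 2 ^ (m (t-1) / 2 ^ (t-1))` for `t ≥ 2`, then for
all odd `t ≥ 3`, `log*(m (t-1)) ≥ (t-3)/2 + log*(m 2)`. -/
theorem stmt_11 (m : ℕ → ℝ) (hm1 : 32 ≤ m 1)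
    (hrec : ∀ t : ℕ, 2 ≤ t → m t = (2 : ℝ) ^ (m (t - 1) / (2 : ℝ) ^ (t - 1))) :
    ∀ t : ℕ, 3 ≤ t → Odd t → (t - 3) / 2 + logStar (m 2) ≤ logStar (m (t - 1)) := by
  rintro t ht ⟨r, rfl⟩
  obtain ⟨s, rfl⟩ : ∃ s, r = s + 1 := ⟨r - 1, by omega⟩
  have h := TowerRecurrence.logStar_two_add_le hrec hm1 s
  rw [show (2 * (s + 1) + 1 - 3) / 2 = s by omega, show 2 * (s + 1) + 1 - 1 = 2 * s + 2 by omega]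
  omega
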